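/- arXiv:2109.05063 — 2 statements merged into one kernel-verified Lean document; each statement's English description precedes it below -/
import Mathlib

section
/- Let d ≥ 2, γ ∈ (0,1), ε > 0, κ₁ > 0, τ > 0, and let h₁, h₂ : B'_{2R} → ℝ (B'_{2R} ⊂ ℝ^{d−1}) be C¹ functions satisfying |∇h_i(x')| ≤ κ₁ |x'|^γ for i = 1,2 and δ(x') := ε + h₁(x') − h₂(x') ≥ τ |x'|^{1+γ} + ε for all x' ∈ B'_{2R}. Set ϑ := 1/(8 κ₁ max{1, τ^{−γ/(1+γ)}}). Then for every z' ∈ B'_R and every 0 < s ≤ ϑ δ(z')^{1/(1+γ)} and every x' with |x' − z'| < s ≤ |z'| + s ≤ 2R, one has (1/2) δ(z') ≤ δ(x') ≤ (3/2) δ(z'). -/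
/-! By the mean value theorem on the ball of radius `t = |z'| + |x' − z'|`,
`|δ(x') − δ(z')| ≤ 2κ₁ t^γ |x' − z'|`, and it remains to bound this by `δ(z')/2`.

If `τ ≤ 8κ₁`, then with `M = max{1, τ^{−γ/(1+γ)}}` both `|z'|^γ` (from `δ(z') ≥ τ|z'|^{1+γ}`) and
`s^γ` (from `s ≤ ϑ δ(z')^{1/(1+γ)}`) are at most `M δ(z')^{γ/(1+γ)}`, and `8κ₁Mϑ = 1` closes the
estimate. If `τ > 8κ₁`, the gradient bound lets `δ` deviate from `δ(0)` by at most `2κ₁|y'|^{1+γ}`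
while `δ(y') ≥ τ|y'|^{1+γ}`; so `δ(0) ≥ (τ − 2κ₁) t^{1+γ}` and `δ(z') ≥ (τ − 4κ₁) t^{1+γ}`,
whatever `s` is. -/

open Real

noncomputable def channelScale (γ κ τ : ℝ) : ℝ := 1 / (8 * κ * max 1 (τ ^ (-(γ / (1 + γ)))))

theorem channelScale_rpow_le {γ κ τ : ℝ} (hγ : 0 ≤ γ) (hκ : 0 < κ) (hτ : 0 < τ) (hτκ : τ ≤ 8 * κ) :
    channelScale γ κ τ ^ γ ≤ max 1 (τ ^ (-(γ / (1 + γ)))) := by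
  set M := max 1 (τ ^ (-(γ / (1 + γ))))
  have hM : 0 < M := one_pos.trans_le (le_max_left _ _)
  have hscale : channelScale γ κ τ ≤ (τ * M)⁻¹ := by
    rw [channelScale, one_div]
    gcongr
  have hτM : τ ^ (-γ) ≤ M ^ (1 + γ) := by
    calc τ ^ (-γ) = (τ ^ (-(γ / (1 + γ)))) ^ (1 + γ) := by
          rw [← rpow_mul hτ.le]; congr 1; field_simp
      _ ≤ M ^ (1 + γ) := by gcongr; exact le_max_right _ _
  calc channelScale γ κ τ ^ γ ≤ ((τ * M)⁻¹) ^ γ := by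
        gcongr
        exact one_div_nonneg.2 (by positivity)
    _ = τ ^ (-γ) * M ^ (-γ) := by
        rw [inv_rpow (by positivity), mul_rpow hτ.le hM.le, rpow_neg hτ.le, rpow_neg hM.le, mul_inv]
    _ ≤ M ^ (1 + γ) * M ^ (-γ) := by gcongr
    _ = M := by rw [← rpow_add hM]; norm_num

theorem rpow_le_of_mul_rpow_one_add_le {γ τ ρ δ : ℝ} (hγ : 0 ≤ γ) (hτ : 0 < τ) (hρ : 0 ≤ ρ)
    (hδ : τ * ρ ^ (1 + γ) ≤ δ) :
    ρ ^ γ ≤ τ ^ (-(γ / (1 + γ))) * (δ ^ (1 / (1 + γ))) ^ γ := by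
  have hδ0 : 0 ≤ δ := le_trans (by positivity) hδ
  calc ρ ^ γ = (ρ ^ (1 + γ)) ^ (γ / (1 + γ)) := by
        rw [← rpow_mul hρ]; congr 1; field_simp
    _ ≤ (δ / τ) ^ (γ / (1 + γ)) := by
        gcongr
        rwa [le_div_iff₀ hτ, mul_comm]
    _ = τ ^ (-(γ / (1 + γ))) * (δ ^ (1 / (1 + γ))) ^ γ := by
        rw [div_rpow hδ0 hτ.le, rpow_neg hτ.le, ← rpow_mul hδ0, div_eq_mul_inv, mul_comm]
        congr 2; ring

theorem two_mul_rpow_mul_le_of_le_channelScale {γ κ τ ρ r s δ : ℝ} (hγ : γ ∈ Set.Ioo 0 1)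
    (hκ : 0 < κ) (hτ : 0 < τ) (hτκ : τ ≤ 8 * κ) (hρ : 0 ≤ ρ) (hr : 0 ≤ r) (hrs : r ≤ s)
    (hδ : τ * ρ ^ (1 + γ) ≤ δ) (hs : s ≤ channelScale γ κ τ * δ ^ (1 / (1 + γ))) :
    2 * κ * (ρ + r) ^ γ * r ≤ δ / 2 := by
  obtain ⟨hγ0, hγ1⟩ := hγ
  have hδ0 : 0 ≤ δ := le_trans (by positivity) hδ
  have hs0 : 0 ≤ s := hr.trans hrs
  set M := max 1 (τ ^ (-(γ / (1 + γ))))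
  set θ := channelScale γ κ τ
  set u := δ ^ (1 / (1 + γ))
  have hM : 0 < M := one_pos.trans_le (le_max_left _ _)
  have hθ_eq : θ = 1 / (8 * κ * M) := rfl
  have hθ : 0 < θ := by rw [hθ_eq]; positivity
  have hθM : 8 * κ * M * θ = 1 := by rw [hθ_eq]; field_simp
  have hu : u ^ γ * u = δ := by
    have h : 1 / (1 + γ) * γ + 1 / (1 + γ) = 1 := by field_simp; ring
    rw [← rpow_mul hδ0, ← rpow_add' hδ0 (by rw [h]; norm_num), h, rpow_one]
  have hρu : ρ ^ γ ≤ M * u ^ γ :=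
    (rpow_le_of_mul_rpow_one_add_le hγ0.le hτ hρ hδ).trans (by gcongr; exact le_max_right _ _)
  have hsu : s ^ γ ≤ M * u ^ γ :=
    calc s ^ γ ≤ (θ * u) ^ γ := by gcongr
      _ = θ ^ γ * u ^ γ := mul_rpow hθ.le (by positivity)
      _ ≤ M * u ^ γ := by gcongr; exact channelScale_rpow_le hγ0.le hκ hτ hτκ
  calc 2 * κ * (ρ + r) ^ γ * r ≤ 2 * κ * (ρ ^ γ + s ^ γ) * (θ * u) := by
        gcongr 2 * κ * ?_ * ?_
        · exact (rpow_add_le_add_rpow hρ hr hγ0.le hγ1.le).trans (by gcongr)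
        · exact hrs.trans hs
    _ ≤ 2 * κ * (M * u ^ γ + M * u ^ γ) * (θ * u) := by gcongr
    _ = (8 * κ * M * θ) * (u ^ γ * u) / 2 := by ring
    _ = δ / 2 := by rw [hθM, hu, one_mul]

section

variable {E F : Type*} [NormedAddCommGroup E] [NormedSpace ℝ E] [NormedAddCommGroup F]
  [NormedSpace ℝ F]

theorem norm_sub_le_of_norm_fderiv_le_rpow {f : E → F} {C γ t : ℝ} (hC : 0 ≤ C) (hγ : 0 ≤ γ)
    (hf : ∀ y, ‖y‖ ≤ t → DifferentiableAt ℝ f y)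
    (hf' : ∀ y, ‖y‖ ≤ t → ‖fderiv ℝ f y‖ ≤ C * ‖y‖ ^ γ) {a b : E} (ha : ‖a‖ ≤ t) (hb : ‖b‖ ≤ t) :
    ‖f b - f a‖ ≤ C * t ^ γ * ‖b - a‖ := by
  refine (convex_closedBall (0 : E) t).norm_image_sub_le_of_norm_fderiv_le
    (fun y hy => hf y (mem_closedBall_zero_iff.1 hy)) (fun y hy => ?_)
    (mem_closedBall_zero_iff.2 ha) (mem_closedBall_zero_iff.2 hb)
  rw [mem_closedBall_zero_iff] at hy
  exact (hf' y hy).trans (by gcongr)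

theorem two_mul_rpow_mul_le_of_mul_lt {g : E → ℝ} {γ κ τ R : ℝ} (hγ : 0 ≤ γ) (hκ : 0 ≤ κ)
    (hτκ : 8 * κ < τ) (hg : ∀ y, ‖y‖ < 2 * R → DifferentiableAt ℝ g y)
    (hg' : ∀ y, ‖y‖ < 2 * R → ‖fderiv ℝ g y‖ ≤ 2 * κ * ‖y‖ ^ γ)
    (hgτ : ∀ y, ‖y‖ < 2 * R → τ * ‖y‖ ^ (1 + γ) ≤ g y) {x z : E}
    (hxz : ‖z‖ + ‖x - z‖ < 2 * R) :
    2 * κ * (‖z‖ + ‖x - z‖) ^ γ * ‖x - z‖ ≤ g z / 2 := by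
  have hdev : ∀ y, ‖y‖ < 2 * R → |g y - g 0| ≤ 2 * κ * ‖y‖ ^ (1 + γ) := fun y hy => by
    have := norm_sub_le_of_norm_fderiv_le_rpow (by positivity) hγ
      (fun w hw => hg w (hw.trans_lt hy)) (fun w hw => hg' w (hw.trans_lt hy))
      (norm_zero.trans_le (norm_nonneg y)) le_rfl
    rwa [sub_zero, Real.norm_eq_abs, mul_assoc, ← rpow_add_one' (norm_nonneg y) (by positivity),
      add_comm γ 1] at this
  have hg0 : ∀ y, ‖y‖ < 2 * R → (τ - 2 * κ) * ‖y‖ ^ (1 + γ) ≤ g 0 := fun y hy => by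
    linarith [hgτ y hy, (abs_le.1 (hdev y hy)).2]
  have hτ : 0 < τ := by linarith
  rcases eq_or_ne x z with rfl | hne
  · simp only [sub_self, norm_zero, mul_zero]
    have := hgτ x (by simpa using hxz)
    linarith [show 0 ≤ τ * ‖x‖ ^ (1 + γ) by positivity]
  set t := ‖z‖ + ‖x - z‖
  -- a point of norm exactly `t`, at which `hg0` bounds `g 0` from below
  have hnorm : ‖(t / ‖x - z‖) • (x - z)‖ = t := by
    rw [norm_smul, Real.norm_of_nonneg (by positivity), div_mul_cancel₀]
    exact norm_ne_zero_iff.2 (sub_ne_zero.2 hne)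
  have hzt : ‖z‖ ^ (1 + γ) ≤ t ^ (1 + γ) := by gcongr; simp [t]
  have hgz : (τ - 4 * κ) * t ^ (1 + γ) ≤ g z := by
    have h1 := hg0 _ (hnorm ▸ hxz)
    rw [hnorm] at h1
    have h2 := (abs_le.1 (hdev z (lt_of_le_of_lt (by simp [t]) hxz))).1
    nlinarith
  calc 2 * κ * t ^ γ * ‖x - z‖ ≤ 2 * κ * t ^ γ * t := by gcongr; simp [t]
    _ = 2 * κ * t ^ (1 + γ) := by
        rw [mul_assoc, ← rpow_add_one' (by positivity) (by positivity), add_comm]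
    _ ≤ g z / 2 := by nlinarith [show 0 ≤ t ^ (1 + γ) by positivity]

end

theorem stmt_12_general (d : ℕ) (γ ε κ₁ τ R : ℝ)
    (hγ : γ ∈ Set.Ioo (0 : ℝ) 1) (hε : 0 < ε) (hκ : 0 < κ₁) (hτ : 0 < τ)
    (h₁ h₂ : EuclideanSpace ℝ (Fin (d - 1)) → ℝ)
    (hdiff₁ : ∀ x, ‖x‖ < 2 * R → DifferentiableAt ℝ h₁ x)
    (hdiff₂ : ∀ x, ‖x‖ < 2 * R → DifferentiableAt ℝ h₂ x)
    (hgrad₁ : ∀ x, ‖x‖ < 2 * R → ‖fderiv ℝ h₁ x‖ ≤ κ₁ * ‖x‖ ^ γ)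
    (hgrad₂ : ∀ x, ‖x‖ < 2 * R → ‖fderiv ℝ h₂ x‖ ≤ κ₁ * ‖x‖ ^ γ)
    (hδ : ∀ x, ‖x‖ < 2 * R → ε + τ * ‖x‖ ^ (1 + γ) ≤ ε + h₁ x - h₂ x) :
    ∀ z, ‖z‖ < R → ∀ s : ℝ, 0 < s →
      s ≤ (1 / (8 * κ₁ * max 1 (τ ^ (-(γ / (1 + γ))))))
            * (ε + h₁ z - h₂ z) ^ (1 / (1 + γ)) →
      ∀ x, ‖x - z‖ < s → ‖z‖ + s ≤ 2 * R →
        (ε + h₁ z - h₂ z) / 2 ≤ ε + h₁ x - h₂ x ∧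
          ε + h₁ x - h₂ x ≤ 3 / 2 * (ε + h₁ z - h₂ z) := by
  intro z hz s _ hsθ x hxz hzs
  have hg : ∀ y, ‖y‖ < 2 * R → DifferentiableAt ℝ (fun y => h₁ y - h₂ y) y :=
    fun y hy => (hdiff₁ y hy).sub (hdiff₂ y hy)
  have hg' : ∀ y, ‖y‖ < 2 * R → ‖fderiv ℝ (fun y => h₁ y - h₂ y) y‖ ≤ 2 * κ₁ * ‖y‖ ^ γ :=
    fun y hy => by
      rw [fderiv_fun_sub (hdiff₁ y hy) (hdiff₂ y hy)]
      linarith [norm_sub_le (fderiv ℝ h₁ y) (fderiv ℝ h₂ y), hgrad₁ y hy, hgrad₂ y hy]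
  have hgτ : ∀ y, ‖y‖ < 2 * R → τ * ‖y‖ ^ (1 + γ) ≤ h₁ y - h₂ y :=
    fun y hy => by linarith [hδ y hy]
  have ht : ‖z‖ + ‖x - z‖ < 2 * R := by linarith
  have hvar : |(h₁ x - h₂ x) - (h₁ z - h₂ z)| ≤ 2 * κ₁ * (‖z‖ + ‖x - z‖) ^ γ * ‖x - z‖ := by
    simpa only [Real.norm_eq_abs] using norm_sub_le_of_norm_fderiv_le_rpow (by positivity) hγ.1.le
      (fun y hy => hg y (hy.trans_lt ht)) (fun y hy => hg' y (hy.trans_lt ht))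
      (le_add_of_nonneg_right (norm_nonneg _)) (norm_le_norm_add_norm_sub' x z)
  have hmain : 2 * κ₁ * (‖z‖ + ‖x - z‖) ^ γ * ‖x - z‖ ≤ (ε + h₁ z - h₂ z) / 2 := by
    rcases le_or_gt τ (8 * κ₁) with hτκ | hτκ
    · exact two_mul_rpow_mul_le_of_le_channelScale hγ hκ hτ hτκ (norm_nonneg z) (norm_nonneg _)
        hxz.le (by linarith [hgτ z (by linarith)]) hsθ
    · linarith [two_mul_rpow_mul_le_of_mul_lt hγ.1.le hκ.le hτκ hg hg' hgτ ht]
  constructor <;> linarith [abs_le.1 (hvar.trans hmain)]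

/-- Comparability of the channel thickness `δ(x') = ε + h₁(x') − h₂(x')` on small horizontal
scales: if `|∇h_i| ≤ κ₁|x'|^γ` and `δ ≥ ε + τ|x'|^{1+γ}`, then with
`ϑ = 1/(8κ₁ max{1, τ^{−γ/(1+γ)}})`, for `|z'| < R`, `0 < s ≤ ϑ δ(z')^{1/(1+γ)}`,
`|x' − z'| < s` and `|z'| + s ≤ 2R`, one has `δ(z')/2 ≤ δ(x') ≤ (3/2) δ(z')`. -/
theorem stmt_12 (d : ℕ) (hd : 2 ≤ d) (γ ε κ₁ τ R : ℝ)
    (hγ : γ ∈ Set.Ioo (0 : ℝ) 1) (hε : 0 < ε) (hκ : 0 < κ₁) (hτ : 0 < τ) (hR : 0 < R)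
    (h₁ h₂ : EuclideanSpace ℝ (Fin (d - 1)) → ℝ)
    (hdiff₁ : ∀ x, ‖x‖ < 2 * R → DifferentiableAt ℝ h₁ x)
    (hdiff₂ : ∀ x, ‖x‖ < 2 * R → DifferentiableAt ℝ h₂ x)
    (hgrad₁ : ∀ x, ‖x‖ < 2 * R → ‖fderiv ℝ h₁ x‖ ≤ κ₁ * ‖x‖ ^ γ)
    (hgrad₂ : ∀ x, ‖x‖ < 2 * R → ‖fderiv ℝ h₂ x‖ ≤ κ₁ * ‖x‖ ^ γ)
    (hδ : ∀ x, ‖x‖ < 2 * R → ε + τ * ‖x‖ ^ (1 + γ) ≤ ε + h₁ x - h₂ x) :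
    ∀ z, ‖z‖ < R → ∀ s : ℝ, 0 < s →
      s ≤ (1 / (8 * κ₁ * max 1 (τ ^ (-(γ / (1 + γ))))))
            * (ε + h₁ z - h₂ z) ^ (1 / (1 + γ)) →
      ∀ x, ‖x - z‖ < s → ‖z‖ + s ≤ 2 * R →
        (ε + h₁ z - h₂ z) / 2 ≤ ε + h₁ x - h₂ x ∧
          ε + h₁ x - h₂ x ≤ 3 / 2 * (ε + h₁ z - h₂ z) :=
  stmt_12_general d γ ε κ₁ τ R hγ hε hκ hτ h₁ h₂ hdiff₁ hdiff₂ hgrad₁ hgrad₂ hδ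
end

section
/- Let d ≥ 2, λ, μ ∈ ℝ, v̄ a differentiable scalar function on an open U ⊂ ℝ^d, and for fixed indices 1 ≤ i < j ≤ d define the vector field ū(x) = (x_j v̄(x)) e_i − (x_i v̄(x)) e_j. Then pointwise on U, (C⁰ e(ū), e(ū)) = μ(x_i² + x_j²) Σ_{k=1}^d (∂_{x_k} v̄)² + (λ+μ)(x_j ∂_{x_i} v̄ − x_i ∂_{x_j} v̄)². -/
/-- The `j`-th partial derivative of a scalar function on `ℝ^d` at `x`. -/
noncomputable def partialDeriv' (d : ℕ) (f : (Fin d → ℝ) → ℝ) (x : Fin d → ℝ)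
    (j : Fin d) : ℝ :=
  fderiv ℝ f x (Pi.single j 1)

/-- The symmetrized gradient (elastic strain) `e(u)_{ij} = (∂_j u^i + ∂_i u^j)/2`. -/
noncomputable def strain (d : ℕ) (u : (Fin d → ℝ) → (Fin d → ℝ)) (x : Fin d → ℝ)
    (i j : Fin d) : ℝ :=
  (partialDeriv' d (fun y => u y i) x j + partialDeriv' d (fun y => u y j) x i) / 2

/-- The isotropic elasticity tensor `C⁰_{ijkl}`. -/
def elastC (d : ℕ) (lam mu : ℝ) (i j k l : Fin d) : ℝ :=
  lam * (if i = j then 1 else 0) * (if k = l then 1 else 0)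
    + mu * ((if i = k then 1 else 0) * (if j = l then 1 else 0)
        + (if i = l then 1 else 0) * (if j = k then 1 else 0))

/-- The Frobenius pairing `(C⁰ e(u), e(v))` at a point `x`. -/
noncomputable def cStrainInner (d : ℕ) (lam mu : ℝ)
    (u v : (Fin d → ℝ) → (Fin d → ℝ)) (x : Fin d → ℝ) : ℝ :=
  ∑ i, ∑ j, (∑ k, ∑ l, elastC d lam mu i j k l * strain d u x k l) * strain d v x i j

theorem csum_reduce (d : ℕ) (lam mu : ℝ) (E : Fin d → Fin d → ℝ) (hE : ∀ k l, E k l = E l k)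
    (k l : Fin d) :
    (∑ k', ∑ l', elastC d lam mu k l k' l' * E k' l')
      = lam * (if k = l then 1 else 0) * (∑ m, E m m) + 2 * mu * E k l := by
  have key : ∀ k' l', elastC d lam mu k l k' l' * E k' l'
      = lam * (if k = l then 1 else 0) * ((if k' = l' then 1 else 0) * E k' l')
        + mu * ((if k' = k then 1 else 0) * ((if l' = l then 1 else 0) * E k' l'))
        + mu * ((if l' = k then 1 else 0) * ((if k' = l then 1 else 0) * E k' l')) := by
    intro k' l'
    simp only [elastC]
    by_cases h1 : k = k' <;> by_cases h2 : l = l' <;> by_cases h3 : k = l' <;>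
      by_cases h4 : l = k' <;> simp [h1, h2, h3, h4, eq_comm] <;> split_ifs <;> ring
  have hA : ∑ k' : Fin d, ∑ l', (if k' = l' then (1:ℝ) else 0) * E k' l' = ∑ m, E m m := by
    simp [ite_mul, Finset.sum_ite_eq]
  have hB : ∑ k' : Fin d, (if k' = k then (1:ℝ) else 0)
      * ∑ l', (if l' = l then 1 else 0) * E k' l' = E k l := by
    simp [ite_mul, Finset.sum_ite_eq']
  have hC : ∑ k' : Fin d, ∑ l', (if l' = k then (1:ℝ) else 0)
      * ((if k' = l then 1 else 0) * E k' l') = E l k := by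
    simp [ite_mul, mul_ite, Finset.sum_ite_eq']
  calc (∑ k', ∑ l', elastC d lam mu k l k' l' * E k' l')
      = ∑ k' : Fin d, ∑ l' : Fin d,
          (lam * (if k = l then 1 else 0) * ((if k' = l' then 1 else 0) * E k' l')
        + mu * ((if k' = k then 1 else 0) * ((if l' = l then 1 else 0) * E k' l'))
        + mu * ((if l' = k then 1 else 0) * ((if k' = l then 1 else 0) * E k' l'))) :=
        Finset.sum_congr rfl fun k' _ => Finset.sum_congr rfl fun l' _ => key k' l'
    _ = lam * (if k = l then 1 else 0) * (∑ m, E m m) + 2 * mu * E k l := by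
        simp only [Finset.sum_add_distrib, ← Finset.mul_sum, hA, hB, hC, hE l k]; ring

theorem pd_mul (d : ℕ) (v : (Fin d → ℝ) → ℝ) (x : Fin d → ℝ)
    (hv : DifferentiableAt ℝ v x) (j k : Fin d) :
    partialDeriv' d (fun y => y j * v y) x k
      = (if k = j then v x else 0) + x j * partialDeriv' d v x k := by
  have h1 : HasFDerivAt (fun y : Fin d → ℝ => y j)
      (ContinuousLinearMap.proj (R := ℝ) (φ := fun _ : Fin d => ℝ) j) x :=
    (ContinuousLinearMap.proj (R := ℝ) (φ := fun _ : Fin d => ℝ) j).hasFDerivAt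
  have h2 := (h1.mul hv.hasFDerivAt)
  unfold partialDeriv'
  rw [show (fun y : Fin d → ℝ => y j * v y) = (fun y : Fin d → ℝ => y j) * v from rfl, h2.fderiv]
  simp [ContinuousLinearMap.proj_apply, Pi.single_apply]
  rcases eq_or_ne k j with h | h
  · simp [h]; ring
  · simp [h, h.symm]

theorem pd_neg (d : ℕ) (f : (Fin d → ℝ) → ℝ) (x : Fin d → ℝ) (k : Fin d) :
    partialDeriv' d (fun y => -(f y)) x k = -(partialDeriv' d f x k) := by
  unfold partialDeriv'
  rw [fderiv_fun_neg]
  simp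

theorem pd_zero (d : ℕ) (x : Fin d → ℝ) (k : Fin d) :
    partialDeriv' d (fun _ => (0:ℝ)) x k = 0 := by
  unfold partialDeriv'
  simp

/-- For the rotational auxiliary field `ū = (x_j v̄) e_i − (x_i v̄) e_j` (with `i < j`),
pointwise on the open set `U` where `v̄` is differentiable:
`(C⁰ e(ū), e(ū)) = μ (x_i² + x_j²) Σ_k (∂_k v̄)² + (λ+μ)(x_j ∂_i v̄ − x_i ∂_j v̄)²`. -/
theorem stmt_17 (d : ℕ) (hd : 2 ≤ d) (lam mu : ℝ)
    (v : (Fin d → ℝ) → ℝ) (U : Set (Fin d → ℝ)) (hU : IsOpen U)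
    (hv : ∀ x ∈ U, DifferentiableAt ℝ v x) (i j : Fin d) (hij : i < j) :
    ∀ x ∈ U,
      cStrainInner d lam mu
          (fun y m => if m = i then y j * v y else if m = j then -(y i * v y) else 0)
          (fun y m => if m = i then y j * v y else if m = j then -(y i * v y) else 0) x
        = mu * ((x i) ^ 2 + (x j) ^ 2) * (∑ k, (partialDeriv' d v x k) ^ 2)
            + (lam + mu) * (x j * partialDeriv' d v x i - x i * partialDeriv' d v x j) ^ 2 := by
  intro x hx
  have hvx := hv x hx
  have hne : i ≠ j := hij.ne
  set p : Fin d → ℝ := fun m => partialDeriv' d v x m with hp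
  set c : Fin d → ℝ := fun m => if m = i then x j else if m = j then -(x i) else 0 with hcdef
  set E : Fin d → Fin d → ℝ := fun k l => (c k * p l + c l * p k) / 2 with hEdef
  have hEsymm : ∀ k l, E k l = E l k := by intro k l; simp only [hEdef]; ring
  -- derivative of the components
  have comp : ∀ k : Fin d,
      (fun y : Fin d → ℝ => if k = i then y j * v y else if k = j then -(y i * v y) else 0)
        = (if k = i then fun y => y j * v y
            else if k = j then fun y => -(y i * v y) else fun _ => 0) := by
    intro k; split_ifs <;> rfl
  have hDu : ∀ k l : Fin d,
      partialDeriv' d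
        (fun y => if k = i then y j * v y else if k = j then -(y i * v y) else 0) x l
      = if k = i then ((if l = j then v x else 0) + x j * p l)
        else if k = j then -((if l = i then v x else 0) + x i * p l) else 0 := by
    intro k l
    rw [comp]
    by_cases h1 : k = i
    · rw [if_pos h1, if_pos h1]
      exact pd_mul d v x hvx j l
    · rw [if_neg h1, if_neg h1]
      by_cases h2 : k = j
      · rw [if_pos h2, if_pos h2, pd_neg, pd_mul d v x hvx i l]
      · rw [if_neg h2, if_neg h2]
        exact pd_zero d x l
  -- the strain tensor
  have hst : ∀ k l : Fin d,
      strain d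
        (fun y m => if m = i then y j * v y else if m = j then -(y i * v y) else 0) x k l
      = E k l := by
    intro k l
    show (partialDeriv' d
          (fun y => if k = i then y j * v y else if k = j then -(y i * v y) else 0) x l
        + partialDeriv' d
          (fun y => if l = i then y j * v y else if l = j then -(y i * v y) else 0) x k) / 2
      = E k l
    rw [hDu k l, hDu l k]
    simp only [hEdef, hcdef]
    by_cases hk1 : k = i <;> by_cases hk2 : k = j <;>
      by_cases hl1 : l = i <;> by_cases hl2 : l = j <;>
      simp [hk1, hk2, hl1, hl2, hne, hne.symm] <;> ring
  -- reduce the elasticity pairing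
  have hred : ∀ k l : Fin d,
      (∑ k', ∑ l', elastC d lam mu k l k' l' * E k' l')
        = lam * (if k = l then 1 else 0) * (∑ m, E m m) + 2 * mu * E k l :=
    csum_reduce d lam mu E hEsymm
  unfold cStrainInner
  simp only [hst, hred]
  -- now pure algebra
  have hcm : ∀ m, c m * p m
      = (if m = i then x j * p i else 0) + (if m = j then -(x i * p j) else 0) := by
    intro m
    simp only [hcdef]
    by_cases h1 : m = i <;> by_cases h2 : m = j <;> simp [h1, h2, hne, hne.symm] <;> ring
  have hS1 : ∑ m, c m * p m = x j * p i - x i * p j := by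
    simp only [hcm, Finset.sum_add_distrib, Finset.sum_ite_eq', Finset.mem_univ, if_true]
    ring
  have hT : ∑ m, E m m = x j * p i - x i * p j := by
    have : ∀ m, E m m = c m * p m := by intro m; simp only [hEdef]; ring
    simp only [this, hS1]
  have hcsq : ∀ m, c m ^ 2 = (if m = i then x j ^ 2 else 0) + (if m = j then x i ^ 2 else 0) := by
    intro m
    simp only [hcdef]
    by_cases h1 : m = i <;> by_cases h2 : m = j <;> simp [h1, h2, hne, hne.symm] <;> ring
  have hSc : ∑ m, c m ^ 2 = x j ^ 2 + x i ^ 2 := by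
    simp only [hcsq, Finset.sum_add_distrib, Finset.sum_ite_eq', Finset.mem_univ, if_true]
  have expand : ∀ k l : Fin d,
      (lam * (if k = l then 1 else 0) * (∑ m, E m m) + 2 * mu * E k l) * E k l
        = lam * (x j * p i - x i * p j) * (if k = l then c k * p k else 0)
          + (mu/2) * (c k ^ 2 * p l ^ 2) + (mu/2) * (c l ^ 2 * p k ^ 2)
          + mu * ((c k * p k) * (c l * p l)) := by
    intro k l
    rw [hT]
    simp only [hEdef]
    by_cases h : k = l <;> simp [h] <;> ring
  have sep : ∀ (f g : Fin d → ℝ) (r : ℝ),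
      ∑ k : Fin d, ∑ l : Fin d, r * (f k * g l) = r * ((∑ m, f m) * (∑ m, g m)) := by
    intro f g r
    rw [Finset.sum_mul_sum, Finset.mul_sum]
    exact Finset.sum_congr rfl fun k _ => by rw [Finset.mul_sum]
  have e1 : ∑ k : Fin d, ∑ l : Fin d,
      (lam * (x j * p i - x i * p j) * if k = l then c k * p k else 0)
      = lam * (x j * p i - x i * p j) * ∑ m, c m * p m := by
    rw [Finset.mul_sum]
    refine Finset.sum_congr rfl fun k _ => ?_
    simp [mul_ite, Finset.sum_ite_eq]
  have e2 : ∑ k : Fin d, ∑ l : Fin d, (mu/2) * (c k ^ 2 * p l ^ 2)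
      = (mu/2) * ((∑ m, c m ^ 2) * (∑ m, p m ^ 2)) := sep _ _ _
  have e3 : ∑ k : Fin d, ∑ l : Fin d, (mu/2) * (c l ^ 2 * p k ^ 2)
      = (mu/2) * ((∑ m, c m ^ 2) * (∑ m, p m ^ 2)) := by
    rw [Finset.sum_comm]
    exact sep _ _ _
  have e4 : ∑ k : Fin d, ∑ l : Fin d, mu * ((c k * p k) * (c l * p l))
      = mu * ((∑ m, c m * p m) * (∑ m, c m * p m)) := sep _ _ _
  calc (∑ k, ∑ l, (lam * (if k = l then 1 else 0) * (∑ m, E m m) + 2 * mu * E k l) * E k l)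
      = ∑ k : Fin d, ∑ l : Fin d,
          (lam * (x j * p i - x i * p j) * (if k = l then c k * p k else 0)
          + (mu/2) * (c k ^ 2 * p l ^ 2) + (mu/2) * (c l ^ 2 * p k ^ 2)
          + mu * ((c k * p k) * (c l * p l))) :=
        Finset.sum_congr rfl fun k _ => Finset.sum_congr rfl fun l _ => expand k l
    _ = lam * (x j * p i - x i * p j) * (∑ m, c m * p m)
          + (mu/2) * ((∑ m, c m ^ 2) * (∑ m, p m ^ 2))
          + (mu/2) * ((∑ m, c m ^ 2) * (∑ m, p m ^ 2))
          + mu * ((∑ m, c m * p m) * (∑ m, c m * p m)) := by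
        simp only [Finset.sum_add_distrib]
        rw [e1, e2, e3, e4]
    _ = mu * ((x i) ^ 2 + (x j) ^ 2) * (∑ k, (partialDeriv' d v x k) ^ 2)
            + (lam + mu) * (x j * partialDeriv' d v x i - x i * partialDeriv' d v x j) ^ 2 := by
        rw [hS1, hSc]
        have : ∀ m, partialDeriv' d v x m = p m := fun m => rfl
        simp only [this]
        ring
end
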